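/- arXiv:2104.08985 — 2 statements merged into one kernel-verified Lean document; each statement's English description precedes it below -/
import Mathlib

section
/- Fix a tariff γ > 0 with u₀ ≤ x̄ + bγ. Then the expected revenue p ↦ γ · 1/(1 + exp(λ·(exp(−(−log p)^α)·(x̄ − x̲)^β − (x̄ + bγ − u₀)^β))) is strictly decreasing in the worst-case probability p on (0,1): making the worst-case SMoDS outcome more likely strictly lowers both the acceptance probability and the expected revenue at any fixed positive tariff. -/
open Real Set

lemma key_anti (α β lam b xlow xbar u₀ γ : ℝ)
    (hα : 0 < α) (hβ : β ∈ Set.Ioo (0 : ℝ) 1) (hlam : 0 < lam)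
    (hx : xlow < xbar) :
    StrictAntiOn
      (fun p : ℝ =>
        1 / (1 + Real.exp (lam * (Real.exp (-((-Real.log p) ^ α)) * (xbar - xlow) ^ β
          - (xbar + b * γ - u₀) ^ β))))
      (Set.Ioo (0 : ℝ) 1) := by
  intro p hp q hq hpq
  have hlogp : Real.log p < 0 := Real.log_neg hp.1 hp.2
  have hlogq : Real.log q < 0 := Real.log_neg hq.1 hq.2
  have hlog : Real.log p < Real.log q := Real.log_lt_log hp.1 hpq
  have h1 : (-Real.log q) ^ α < (-Real.log p) ^ α :=
    Real.rpow_lt_rpow (by linarith) (by linarith) hα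
  have hC : (0:ℝ) < (xbar - xlow) ^ β := Real.rpow_pos_of_pos (by linarith) β
  have h2 : Real.exp (-((-Real.log p) ^ α)) * (xbar - xlow) ^ β
      < Real.exp (-((-Real.log q) ^ α)) * (xbar - xlow) ^ β := by
    apply mul_lt_mul_of_pos_right _ hC
    exact Real.exp_lt_exp.mpr (by linarith)
  have h3 : Real.exp (lam * (Real.exp (-((-Real.log p) ^ α)) * (xbar - xlow) ^ β
        - (xbar + b * γ - u₀) ^ β))
      < Real.exp (lam * (Real.exp (-((-Real.log q) ^ α)) * (xbar - xlow) ^ β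
        - (xbar + b * γ - u₀) ^ β)) := by
    apply Real.exp_lt_exp.mpr
    apply mul_lt_mul_of_pos_left (by linarith) hlam
  have hpos : (0:ℝ) < 1 + Real.exp (lam * (Real.exp (-((-Real.log p) ^ α)) * (xbar - xlow) ^ β
        - (xbar + b * γ - u₀) ^ β)) := by positivity
  exact one_div_lt_one_div_of_lt hpos (by linarith)

/-- At any fixed positive tariff `γ` with `u₀ ≤ xbar + b * γ`, the expected revenue
`p ↦ γ * P(γ)` is strictly decreasing in the worst-case probability `p` on `(0, 1)`:
making the worst-case SMoDS outcome more likely strictly lowers both the acceptance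
probability and the expected revenue. -/
theorem expected_revenue_strictAnti_in_p
    (α β lam b xlow xbar u₀ γ : ℝ)
    (hα : 0 < α) (hβ : β ∈ Set.Ioo (0 : ℝ) 1) (hlam : 0 < lam)
    (hb : b < 0) (hx : xlow < xbar) (hγ : 0 < γ) (hvalid : u₀ ≤ xbar + b * γ) :
    StrictAntiOn
      (fun p : ℝ =>
        γ * (1 / (1 + Real.exp (lam * (Real.exp (-((-Real.log p) ^ α)) * (xbar - xlow) ^ β
          - (xbar + b * γ - u₀) ^ β)))))
      (Set.Ioo (0 : ℝ) 1) ∧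
    StrictAntiOn
      (fun p : ℝ =>
        1 / (1 + Real.exp (lam * (Real.exp (-((-Real.log p) ^ α)) * (xbar - xlow) ^ β
          - (xbar + b * γ - u₀) ^ β))))
      (Set.Ioo (0 : ℝ) 1) := by
  have h := key_anti α β lam b xlow xbar u₀ γ hα hβ hlam hx
  refine ⟨fun p hp q hq hpq => ?_, h⟩
  exact mul_lt_mul_of_pos_left (h hp hq hpq) hγ
end

section
/- Fix γ with u₀ ≤ x̄ + bγ and suppose the worst-case probability satisfies p ∈ (e⁻¹, 1). Then the map α ↦ 1/(1 + exp(λ·(exp(−(−log p)^α)·(x̄ − x̲)^β − (x̄ + bγ − u₀)^β))) is strictly decreasing on (0,∞): weaker probability distortion (larger α) strictly lowers the subjective acceptance probability of the SMoDS when the worst-case outcome is the likely one. -/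
open Real Set

/-- Fix a tariff `γ` with `u₀ ≤ xbar + b * γ` and a worst-case probability `p ∈ (e⁻¹, 1)`.
Then the acceptance probability is strictly decreasing in the distortion parameter `α` on
`(0, ∞)`: weaker probability distortion strictly lowers the subjective acceptance
probability of the SMoDS when the worst-case outcome is the likely one. -/
theorem acceptance_strictAnti_in_alpha
    (β lam p b xlow xbar u₀ γ : ℝ)
    (hβ : β ∈ Set.Ioo (0 : ℝ) 1) (hlam : 0 < lam)
    (hp : p ∈ Set.Ioo (Real.exp (-1)) 1) (hb : b < 0) (hx : xlow < xbar)
    (hvalid : u₀ ≤ xbar + b * γ) :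
    StrictAntiOn
      (fun α : ℝ =>
        1 / (1 + Real.exp (lam * (Real.exp (-((-Real.log p) ^ α)) * (xbar - xlow) ^ β
          - (xbar + b * γ - u₀) ^ β))))
      (Set.Ioi (0 : ℝ)) := by
  intro a ha a' ha' hlt
  have hp0 : 0 < p := lt_trans (Real.exp_pos _) hp.1
  -- t = -log p ∈ (0,1)
  have ht0 : 0 < -Real.log p := by
    have : Real.log p < 0 := Real.log_neg hp0 hp.2
    linarith
  have ht1 : -Real.log p < 1 := by
    have := Real.log_lt_log (Real.exp_pos _) hp.1
    rw [Real.log_exp] at this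
    linarith
  have hpow : (-Real.log p) ^ a' < (-Real.log p) ^ a :=
    Real.rpow_lt_rpow_of_exponent_gt ht0 ht1 hlt
  have hxpos : 0 < (xbar - xlow) ^ β := Real.rpow_pos_of_pos (by linarith) β
  have hexp : Real.exp (-((-Real.log p) ^ a)) < Real.exp (-((-Real.log p) ^ a')) :=
    Real.exp_lt_exp.2 (by linarith)
  have hmul : Real.exp (-((-Real.log p) ^ a)) * (xbar - xlow) ^ β
      < Real.exp (-((-Real.log p) ^ a')) * (xbar - xlow) ^ β :=
    mul_lt_mul_of_pos_right hexp hxpos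
  have harg : lam * (Real.exp (-((-Real.log p) ^ a)) * (xbar - xlow) ^ β
      - (xbar + b * γ - u₀) ^ β)
      < lam * (Real.exp (-((-Real.log p) ^ a')) * (xbar - xlow) ^ β
      - (xbar + b * γ - u₀) ^ β) :=
    mul_lt_mul_of_pos_left (by linarith) hlam
  have hE := Real.exp_lt_exp.2 harg
  have h1 : 0 < 1 + Real.exp (lam * (Real.exp (-((-Real.log p) ^ a)) * (xbar - xlow) ^ β
      - (xbar + b * γ - u₀) ^ β)) := by positivity
  exact one_div_lt_one_div_of_lt h1 (by linarith)
end
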